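/- arXiv:1607.01121 — 3 statements merged into one kernel-verified Lean document; each statement's English description precedes it below -/
import Mathlib

section
/- Let $m \ge 2n$ be natural numbers, and let $A, C \in \mathbb{C}^{m\times n}$ and $B, D \in \mathbb{C}^{n\times m}$. Then for every $\lambda \in \mathbb{C}$, $\det(\lambda I_m - AB - CD) = \lambda^{m-2n}\,\det\begin{bmatrix} \lambda I_n - BA & BC \\ DA & \lambda I_n - DC \end{bmatrix}$. -/
open Matrix

theorem Matrix.det_smul_one_sub_mul_eq_pow_mul {R m n : Type*} [CommRing R]
    [Fintype m] [DecidableEq m] [Fintype n] [DecidableEq n]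
    (A : Matrix m n R) (B : Matrix n m R) (hle : Fintype.card n ≤ Fintype.card m) (t : R) :
    det (t • 1 - A * B) = t ^ (Fintype.card m - Fintype.card n) * det (t • 1 - B * A) := by
  simpa [eval_charpoly, smul_one_eq_diagonal] using
    congr_arg (Polynomial.eval t) (charpoly_mul_comm_of_le A B hle)

/-- For `m ≥ 2n`, matrices `A, C : ℂ^{m×n}` and `B, D : ℂ^{n×m}`, and any
`λ ∈ ℂ`, one has
`det (λ I_m - A B - C D) = λ^(m - 2n) * det [[λ I_n - B A, B C], [D A, λ I_n - D C]]`. -/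
theorem det_smul_id_sub_mul_sub_mul_eq_pow_mul_det_fromBlocks
    (m n : ℕ) (hmn : 2 * n ≤ m)
    (A C : Matrix (Fin m) (Fin n) ℂ) (B D : Matrix (Fin n) (Fin m) ℂ) (lam : ℂ) :
    Matrix.det (lam • (1 : Matrix (Fin m) (Fin m) ℂ) - A * B - C * D) =
      lam ^ (m - 2 * n) *
        Matrix.det
          (Matrix.fromBlocks
            (lam • (1 : Matrix (Fin n) (Fin n) ℂ) - B * A) (B * C)
            (D * A) (lam • (1 : Matrix (Fin n) (Fin n) ℂ) - D * C)) := by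
  have hcard : Fintype.card (Fin n ⊕ Fin n) = 2 * n := by simp [two_mul]
  -- `AB + CD = [A, -C] [B; -D]`; swapping the factors, the two sign flips cancel in the corners
  calc det (lam • 1 - A * B - C * D)
      = det (lam • 1 - fromCols A (-C) * fromRows B (-D)) := by
        rw [fromCols_mul_fromRows, Matrix.neg_mul, Matrix.mul_neg, neg_neg, sub_sub]
    _ = lam ^ (m - 2 * n) * det (lam • 1 - fromRows B (-D) * fromCols A (-C)) := by
        rw [det_smul_one_sub_mul_eq_pow_mul _ _ (by simpa [hcard] using hmn), hcard,
          Fintype.card_fin]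
    _ = _ := by
        rw [fromRows_mul_fromCols, ← fromBlocks_one, fromBlocks_smul, sub_eq_add_neg,
          fromBlocks_neg, fromBlocks_add]
        simp only [Matrix.mul_neg, Matrix.neg_mul, neg_neg, smul_zero, zero_add, ← sub_eq_add_neg]
end

section
/- Let $x \in \mathbb{C}^n$ and set $a = \begin{bmatrix} x \\ \bar{x} \end{bmatrix} \in \mathbb{C}^{2n}$, $b = i\begin{bmatrix} x \\ -\bar{x} \end{bmatrix} \in \mathbb{C}^{2n}$, and $M = \|x\|^2 I_{2n} + \tfrac{3}{2} a a^* - \tfrac{1}{2} b b^* \in \mathbb{C}^{2n\times 2n}$. Then the characteristic polynomial of $M$ satisfies $\det(\lambda I_{2n} - M) = (\lambda - \|x\|^2)^{2n-2}\,\lambda\,(\lambda - 4\|x\|^2)$ for all $\lambda$; in particular the eigenvalues of $M$ are $4\|x\|^2$, $\|x\|^2$ (with multiplicity $2n-2$), and $0$, and $M$ is Hermitian positive semidefinite. -/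
/-!
Since `star a ⬝ᵥ b = 0`, the matrix `M - ‖x‖² I = (3/2) a a* - (1/2) b b*` factors as `U V` with
`U` of width two, so by the Weinstein–Aronszajn identity its characteristic polynomial is
`X ^ (2n - 2)` times that of the `2 × 2` matrix `V U`. The latter is triangular with diagonal
`(3/2) ‖a‖² = 3 ‖x‖²` and `-(1/2) ‖b‖² = -‖x‖²`; shifting by `‖x‖²` gives the eigenvalues
`4 ‖x‖²`, `‖x‖²` and `0`. Being Hermitian with nonnegative eigenvalues, `M` is positive
semidefinite.
-/

open Matrix Polynomial
open scoped ComplexOrder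

namespace Matrix

theorem vecMulVec_add_vecMulVec_eq_mul {m R : Type*} [NonUnitalNonAssocSemiring R]
    (u₁ v₁ u₂ v₂ : m → R) :
    vecMulVec u₁ v₁ + vecMulVec u₂ v₂ = of (fun i k => ![u₁ i, u₂ i] k) * of ![v₁, v₂] := by
  ext i j
  simp [mul_apply, Fin.sum_univ_two, vecMulVec_apply]

variable {m : Type*} [Fintype m] [DecidableEq m]

section CommRing

variable {R : Type*} [CommRing R]

theorem charpoly_vecMulVec_add_vecMulVec [Nontrivial R] (hm : 2 ≤ Fintype.card m)
    {u₁ v₁ u₂ v₂ : m → R} (h : v₁ ⬝ᵥ u₂ = 0) :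
    (vecMulVec u₁ v₁ + vecMulVec u₂ v₂).charpoly =
      X ^ (Fintype.card m - 2) * ((X - C (v₁ ⬝ᵥ u₁)) * (X - C (v₂ ⬝ᵥ u₂))) := by
  have hgram : of ![v₁, v₂] * of (fun i k => ![u₁ i, u₂ i] k) =
      !![v₁ ⬝ᵥ u₁, v₁ ⬝ᵥ u₂; v₂ ⬝ᵥ u₁, v₂ ⬝ᵥ u₂] := by
    ext k l; fin_cases k <;> fin_cases l <;> rfl
  rw [vecMulVec_add_vecMulVec_eq_mul, charpoly_mul_comm_of_le _ _ (by simpa using hm), hgram,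
    charpoly_fin_two, Fintype.card_fin]
  simp only [trace_fin_two_of, det_fin_two_of, h, zero_mul, sub_zero, map_add, map_mul]
  ring

theorem charpoly_scalar_add (A : Matrix m m R) (c : R) :
    (scalar m c + A).charpoly = A.charpoly.comp (X - C c) := by
  simpa [sub_eq_add_neg, add_comm] using charpoly_sub_scalar A (-c)

theorem det_smul_one_sub_eq_eval_charpoly (A : Matrix m m R) (t : R) :
    det (t • 1 - A) = A.charpoly.eval t := by
  rw [eval_charpoly, scalar_apply, smul_one_eq_diagonal]

end CommRing

theorem IsHermitian.posSemidef_of_isRoot_charpoly_nonneg {𝕜 : Type*} [RCLike 𝕜]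
    {A : Matrix m m 𝕜} (hA : A.IsHermitian) (h : ∀ z, A.charpoly.IsRoot z → 0 ≤ z) :
    A.PosSemidef := by
  refine hA.posSemidef_iff_eigenvalues_nonneg.mpr fun i => ?_
  have hroot : A.charpoly.IsRoot (hA.eigenvalues i) := by
    apply isRoot_of_mem_roots
    rw [hA.roots_charpoly_eq_eigenvalues]
    exact Multiset.mem_map_of_mem _ (Finset.mem_univ_val i)
  exact RCLike.ofReal_nonneg.mp (h _ hroot)

end Matrix

section SumElimStar

variable {ι R : Type*} [Fintype ι] [CommRing R] [StarRing R] (v : ι → R)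

theorem star_sumElim_star_dotProduct_self :
    star (Sum.elim v (star v)) ⬝ᵥ Sum.elim v (star v) = 2 * (star v ⬝ᵥ v) := by
  rw [Function.star_sumElim, sumElim_dotProduct_sumElim, star_star, dotProduct_comm v]
  ring

theorem star_sumElim_neg_star_dotProduct_self :
    star (Sum.elim v (-star v)) ⬝ᵥ Sum.elim v (-star v) = 2 * (star v ⬝ᵥ v) := by
  rw [Function.star_sumElim, sumElim_dotProduct_sumElim, star_neg, star_star, neg_dotProduct,
    dotProduct_neg, neg_neg, dotProduct_comm v]
  ring

theorem star_sumElim_star_dotProduct_sumElim_neg_star :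
    star (Sum.elim v (star v)) ⬝ᵥ Sum.elim v (-star v) = 0 := by
  rw [Function.star_sumElim, sumElim_dotProduct_sumElim, star_star, dotProduct_neg,
    dotProduct_comm v, add_neg_cancel]

end SumElimStar

section ExpectedHessian

variable {𝕜 m : Type*} [RCLike 𝕜] [Fintype m] [DecidableEq m]

def expectedHessian (c : 𝕜) (a b : m → 𝕜) : Matrix m m 𝕜 :=
  c • 1 + (3 / 2 : 𝕜) • vecMulVec a (star a) - (1 / 2 : 𝕜) • vecMulVec b (star b)

variable {c : 𝕜} {a b : m → 𝕜}

theorem isHermitian_expectedHessian (hc : IsSelfAdjoint c) :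
    (expectedHessian c a b).IsHermitian :=
  ((isHermitian_one.smul hc).add
    ((posSemidef_vecMulVec_self_star a).isHermitian.smul (by simp [IsSelfAdjoint]))).sub
    ((posSemidef_vecMulVec_self_star b).isHermitian.smul (by simp [IsSelfAdjoint]))

theorem charpoly_expectedHessian (hm : 2 ≤ Fintype.card m) (ha : star a ⬝ᵥ a = 2 * c)
    (hb : star b ⬝ᵥ b = 2 * c) (hab : star a ⬝ᵥ b = 0) :
    (expectedHessian c a b).charpoly =
      (X - C c) ^ (Fintype.card m - 2) * (X * (X - C (4 * c))) := by
  have hsplit : expectedHessian c a b = scalar m c +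
      (vecMulVec ((3 / 2 : 𝕜) • a) (star a) + vecMulVec ((-1 / 2 : 𝕜) • b) (star b)) := by
    rw [expectedHessian, smul_vecMulVec, smul_vecMulVec, smul_one_eq_diagonal, scalar_apply]
    module
  have h₁ : star a ⬝ᵥ ((3 / 2 : 𝕜) • a) = 3 * c := by
    rw [dotProduct_smul, ha, smul_eq_mul]; ring
  have h₂ : star b ⬝ᵥ ((-1 / 2 : 𝕜) • b) = -c := by
    rw [dotProduct_smul, hb, smul_eq_mul]; ring
  rw [hsplit, charpoly_scalar_add, charpoly_vecMulVec_add_vecMulVec hm (by simp [hab]), h₁, h₂]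
  simp only [mul_comp, pow_comp, sub_comp, X_comp, C_comp, neg_comp, ofNat_comp, map_mul,
    map_neg, map_ofNat]
  ring

theorem posSemidef_expectedHessian (hm : 2 ≤ Fintype.card m) (hc : 0 ≤ c)
    (ha : star a ⬝ᵥ a = 2 * c) (hb : star b ⬝ᵥ b = 2 * c) (hab : star a ⬝ᵥ b = 0) :
    (expectedHessian c a b).PosSemidef := by
  refine (isHermitian_expectedHessian (.of_nonneg hc)).posSemidef_of_isRoot_charpoly_nonneg
    fun z hz => ?_
  simp only [charpoly_expectedHessian hm ha hb hab, IsRoot.def, eval_mul, eval_pow, eval_sub,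
    eval_X, eval_C, mul_eq_zero, pow_eq_zero_iff', sub_eq_zero] at hz
  rcases hz with ⟨rfl, -⟩ | rfl | rfl
  · exact hc
  · exact le_rfl
  · exact mul_nonneg (by norm_num) hc

end ExpectedHessian

/-- For `x ∈ ℂ^n`, with `a = [x; conj x]`, `b = i[x; -conj x]` and
`M = ‖x‖² I + (3/2) a a* - (1/2) b b*`, the characteristic polynomial of `M` is
`(λ - ‖x‖²)^(2n-2) λ (λ - 4‖x‖²)`, and `M` is Hermitian positive semidefinite. -/
theorem charpoly_expected_hessian_complex
    (n : ℕ) (hn : 1 ≤ n) (x : EuclideanSpace ℂ (Fin n))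
    (a b : Fin n ⊕ Fin n → ℂ)
    (ha : a = Sum.elim (fun i => x i) (fun i => starRingEnd ℂ (x i)))
    (hb : b = fun j => Complex.I *
      Sum.elim (fun i => x i) (fun i => -starRingEnd ℂ (x i)) j)
    (M : Matrix (Fin n ⊕ Fin n) (Fin n ⊕ Fin n) ℂ)
    (hM : M = ((‖x‖ : ℂ) ^ 2) • (1 : Matrix (Fin n ⊕ Fin n) (Fin n ⊕ Fin n) ℂ)
        + (3 / 2 : ℂ) • Matrix.vecMulVec a (star a)
        - (1 / 2 : ℂ) • Matrix.vecMulVec b (star b)) :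
    (∀ lam : ℂ,
      Matrix.det (lam • (1 : Matrix (Fin n ⊕ Fin n) (Fin n ⊕ Fin n) ℂ) - M) =
        (lam - (‖x‖ : ℂ) ^ 2) ^ (2 * n - 2) * lam * (lam - 4 * (‖x‖ : ℂ) ^ 2)) ∧
      M.IsHermitian ∧ M.PosSemidef := by
  set c : ℂ := (‖x‖ : ℂ) ^ 2
  replace ha : a = Sum.elim x.ofLp (star x.ofLp) := ha
  replace hb : b = Complex.I • Sum.elim x.ofLp (-star x.ofLp) := hb
  replace hM : M = expectedHessian c a b := hM
  have hx : star x.ofLp ⬝ᵥ x.ofLp = c := by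
    rw [dotProduct_comm, ← EuclideanSpace.inner_eq_star_dotProduct]
    exact inner_self_eq_norm_sq_to_K x
  have haa : star a ⬝ᵥ a = 2 * c := by rw [ha, star_sumElim_star_dotProduct_self, hx]
  have hbb : star b ⬝ᵥ b = 2 * c := by
    rw [hb, star_smul, smul_dotProduct, dotProduct_smul, star_sumElim_neg_star_dotProduct_self,
      hx]
    simp [← mul_assoc, Complex.conj_I]
  have hab : star a ⬝ᵥ b = 0 := by
    rw [ha, hb, dotProduct_smul, star_sumElim_star_dotProduct_sumElim_neg_star, smul_zero]
  have hc : 0 ≤ c := by positivity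
  have hm : 2 ≤ Fintype.card (Fin n ⊕ Fin n) := by
    rw [Fintype.card_sum, Fintype.card_fin]; omega
  refine ⟨fun lam => ?_, hM ▸ isHermitian_expectedHessian (.of_nonneg hc),
    hM ▸ posSemidef_expectedHessian hm hc haa hbb hab⟩
  rw [hM, det_smul_one_sub_eq_eval_charpoly, charpoly_expectedHessian hm haa hbb hab]
  simp only [eval_mul, eval_pow, eval_sub, eval_X, eval_C, Fintype.card_sum, Fintype.card_fin,
    two_mul]
  ring
end

section
/- Let $x, z \in \mathbb{R}^n$ with $\|z - x\| \le \|x\|/12$. Then the real symmetric matrix $(2\|z\|^2 - \|x\|^2) I_n + 4\, z z^T - x x^T$ is positive semidefinite. (Equivalently: the expectation of the real phase-retrieval least-squares objective is convex on the ball of radius $\|x\|/12$ around the solution $x$.) -/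
/-!
Writing `⟪x, v⟫ = ⟪z, v⟫ - ⟪z - x, v⟫`, the rank-two part of the quadratic form satisfies
`4⟪z, v⟫² - ⟪x, v⟫² ≥ -(4/3)⟪z - x, v⟫² ≥ -(4/3)‖z - x‖²‖v‖²`, while near the solution the
coefficient of the identity is large: `‖z‖ ≥ (11/12)‖x‖` gives `2‖z‖² - ‖x‖² ≥ (4/3)‖z - x‖²`.
-/

open Matrix

theorem four_thirds_mul_norm_sub_sq_le {E : Type*} [SeminormedAddCommGroup E] {x z : E}
    (hz : ‖z - x‖ ≤ ‖x‖ / 12) :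
    4 / 3 * ‖z - x‖ ^ 2 ≤ 2 * ‖z‖ ^ 2 - ‖x‖ ^ 2 := by
  have hzx : 11 / 12 * ‖x‖ ≤ ‖z‖ := by linarith [norm_sub_norm_le x z, norm_sub_rev x z]
  have h0 : 0 ≤ 11 / 12 * ‖x‖ := by positivity
  nlinarith [mul_le_mul hzx hzx h0 (norm_nonneg z),
    mul_le_mul hz hz (norm_nonneg _) (by positivity : (0 : ℝ) ≤ ‖x‖ / 12)]

section InnerProduct

variable {E : Type*} [SeminormedAddCommGroup E] [InnerProductSpace ℝ E]

open RealInnerProductSpace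

theorem neg_four_thirds_mul_sq_le_four_mul_inner_sq_sub_inner_sq (x z v : E) :
    -(4 / 3) * (‖z - x‖ * ‖v‖) ^ 2 ≤ 4 * ⟪z, v⟫ ^ 2 - ⟪x, v⟫ ^ 2 := by
  have hx : ⟪x, v⟫ = ⟪z, v⟫ - ⟪z - x, v⟫ := by rw [inner_sub_left]; ring
  have hcs : ⟪z - x, v⟫ ^ 2 ≤ (‖z - x‖ * ‖v‖) ^ 2 :=
    sq_le_sq' (abs_le.mp (abs_real_inner_le_norm _ _)).1 (abs_le.mp (abs_real_inner_le_norm _ _)).2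
  rw [hx]
  -- `4P² - (P - H)² + (4/3)H² = 3(P + H/3)²`
  nlinarith [sq_nonneg (⟪z, v⟫ + ⟪z - x, v⟫ / 3)]

theorem expected_hessian_form_nonneg {x z : E} (hz : ‖z - x‖ ≤ ‖x‖ / 12) (v : E) :
    0 ≤ (2 * ‖z‖ ^ 2 - ‖x‖ ^ 2) * ‖v‖ ^ 2 + 4 * ⟪z, v⟫ ^ 2 - ⟪x, v⟫ ^ 2 := by
  have hform := neg_four_thirds_mul_sq_le_four_mul_inner_sq_sub_inner_sq x z v
  have hcoef := mul_le_mul_of_nonneg_right (four_thirds_mul_norm_sub_sq_le hz) (sq_nonneg ‖v‖)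
  nlinarith

end InnerProduct

theorem dotProduct_smul_one_add_smul_vecMulVec_sub_vecMulVec_mulVec {ι : Type*} [Fintype ι]
    [DecidableEq ι] (a b : ℝ) (u w v : ι → ℝ) :
    star v ⬝ᵥ (a • (1 : Matrix ι ι ℝ) + b • vecMulVec u u - vecMulVec w w) *ᵥ v
      = a * (v ⬝ᵥ v) + b * (u ⬝ᵥ v) ^ 2 - (w ⬝ᵥ v) ^ 2 := by
  simp only [sub_mulVec, add_mulVec, smul_mulVec, one_mulVec, vecMulVec_mulVec, star_trivial,
    dotProduct_sub, dotProduct_add, dotProduct_smul, smul_eq_mul, op_smul_eq_smul]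
  simp [dotProduct_comm v]
  ring

/-- For `x, z ∈ ℝ^n` with `‖z - x‖ ≤ ‖x‖/12`, the matrix
`(2‖z‖² - ‖x‖²) I + 4 z zᵀ - x xᵀ` (the expected Hessian of the real phase-retrieval
least-squares objective) is positive semidefinite. -/
theorem expected_hessian_posSemidef_near_solution
    (n : ℕ) (x z : EuclideanSpace ℝ (Fin n)) (hz : ‖z - x‖ ≤ ‖x‖ / 12) :
    ((2 * ‖z‖ ^ 2 - ‖x‖ ^ 2) • (1 : Matrix (Fin n) (Fin n) ℝ)
        + (4 : ℝ) • Matrix.vecMulVec (fun i => z i) (fun j => z j)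
        - Matrix.vecMulVec (fun i => x i) (fun j => x j)).PosSemidef := by
  refine .of_dotProduct_mulVec_nonneg ?_ fun v => ?_
  · exact ((isHermitian_one.smul (.all _)).add
      ((posSemidef_vecMulVec_self_star _).isHermitian.smul (.all _))).sub
        (posSemidef_vecMulVec_self_star _).isHermitian
  · rw [dotProduct_smul_one_add_smul_vecMulVec_sub_vecMulVec_mulVec]
    have h := expected_hessian_form_nonneg hz (WithLp.toLp 2 v)
    rw [← real_inner_self_eq_norm_sq (WithLp.toLp 2 v)] at h
    simpa only [EuclideanSpace.inner_eq_star_dotProduct, star_trivial, dotProduct_comm v] using h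
end
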